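/- arXiv:2307.06559 — 5 statements merged into one kernel-verified Lean document; each statement's English description precedes it below -/
import Mathlib

section
/- Let A be a finite-dimensional k-algebra and M a finite-dimensional right A-module. A morphism f : X → M in mod A is right minimal (i.e., every h ∈ End_A(X) with f ∘ h = f is an automorphism) if and only if Ker f contains no nonzero direct summand of X. -/
/-- A morphism `f : X → M` of modules is *right minimal* if every endomorphism `h` of `X`
with `f ∘ h = f` is an automorphism. -/
def RightMinimal {R X M : Type*} [Ring R] [AddCommGroup X] [Module R X]
    [AddCommGroup M] [Module R M] (f : X →ₗ[R] M) : Prop :=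
  ∀ h : X →ₗ[R] X, f.comp h = f → Function.Bijective h

/-!
If a summand `N` of `X` with complement `N'` lies in `Ker f`, the projection onto `N'` along `N`
is an endomorphism `p` with `f ∘ p = f` and kernel `N`, so right minimality forces `N = ⊥`.
Conversely, given `h` with `f ∘ h = f`, Fitting's lemma splits `X = Ker hⁿ ⊕ Im hⁿ`;
since `f ∘ hⁿ = f`, the summand `Ker hⁿ` lies in `Ker f`, hence vanishes, so `h` is injective and,
`X` being Artinian, bijective.
-/

section

variable {R X M : Type*} [Ring R] [AddCommGroup X] [Module R X] [AddCommGroup M] [Module R M]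

theorem LinearMap.comp_pow_eq_self_of_comp_eq_self {f : X →ₗ[R] M} {h : X →ₗ[R] X}
    (hfh : f ∘ₗ h = f) (n : ℕ) : f ∘ₗ (h ^ n) = f := by
  induction n with
  | zero => rfl
  | succ n ih => rw [pow_succ, Module.End.mul_eq_comp, ← LinearMap.comp_assoc, ih, hfh]

theorem LinearMap.comp_projection_eq_self_of_le_ker {f : X →ₗ[R] M} {N N' : Submodule R X}
    (hN : N ≤ LinearMap.ker f) (hc : IsCompl N' N) : f ∘ₗ N'.projection N hc = f := by
  ext x
  have hx : f (x - N'.projection N hc x) = 0 := hN (Submodule.sub_projection_mem hc x)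
  rw [map_sub, sub_eq_zero] at hx
  exact hx.symm

namespace RightMinimal

theorem eq_bot_of_le_ker_of_isCompl {f : X →ₗ[R] M} (hf : RightMinimal f)
    {N N' : Submodule R X} (hN : N ≤ LinearMap.ker f) (hc : IsCompl N N') : N = ⊥ := by
  have hp := hf _ (LinearMap.comp_projection_eq_self_of_le_ker hN hc.symm)
  rw [← Submodule.ker_projection hc.symm]
  exact LinearMap.ker_eq_bot.mpr hp.injective

theorem of_forall_summand_le_ker_eq_bot [IsNoetherian R X] [IsArtinian R X] {f : X →ₗ[R] M}
    (H : ∀ N : Submodule R X, N ≤ LinearMap.ker f → (∃ N', IsCompl N N') → N = ⊥) :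
    RightMinimal f := by
  intro h hfh
  obtain ⟨n, hn⟩ := Filter.eventually_atTop.mp
    (h.eventually_isCompl_ker_pow_range_pow.and (Filter.eventually_ge_atTop 1))
  obtain ⟨hfitting, hn1⟩ := hn n le_rfl
  have hker : LinearMap.ker (h ^ n) ≤ LinearMap.ker f := by
    intro x hx
    rw [LinearMap.mem_ker] at hx ⊢
    rw [← LinearMap.comp_pow_eq_self_of_comp_eq_self hfh n, LinearMap.comp_apply, hx, map_zero]
  have hinj : Function.Injective (h ^ n) :=
    LinearMap.ker_eq_bot.mp (H _ hker ⟨_, hfitting⟩)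
  exact IsArtinian.bijective_of_injective_endomorphism h
    (Module.End.injective_of_iterate_injective (by omega) hinj)

end RightMinimal

end

theorem rightMinimal_iff_ker_no_nonzero_summand_general
    {k A : Type*} [Field k] [Ring A] [Algebra k A]
    {X M : Type*}
    [AddCommGroup X] [Module Aᵐᵒᵖ X] [Module k X] [IsScalarTower k Aᵐᵒᵖ X]
    [FiniteDimensional k X]
    [AddCommGroup M] [Module Aᵐᵒᵖ M]
    (f : X →ₗ[Aᵐᵒᵖ] M) :
    RightMinimal f ↔
      ∀ N : Submodule Aᵐᵒᵖ X, N ≤ LinearMap.ker f →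
        (∃ N' : Submodule Aᵐᵒᵖ X, IsCompl N N') → N = ⊥ := by
  have : IsNoetherian Aᵐᵒᵖ X := isNoetherian_of_tower k inferInstance
  have : IsArtinian Aᵐᵒᵖ X := isArtinian_of_tower k inferInstance
  exact ⟨fun hf N hN ⟨_, hc⟩ => hf.eq_bot_of_le_ker_of_isCompl hN hc,
    RightMinimal.of_forall_summand_le_ker_eq_bot⟩

/-- A morphism `f : X → M` of finite-dimensional right modules over a finite-dimensional
`k`-algebra `A` is right minimal iff `Ker f` contains no nonzero direct summand of `X`. -/
theorem rightMinimal_iff_ker_no_nonzero_summand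
    {k A : Type*} [Field k] [Ring A] [Algebra k A] [FiniteDimensional k A]
    {X M : Type*}
    [AddCommGroup X] [Module Aᵐᵒᵖ X] [Module k X] [IsScalarTower k Aᵐᵒᵖ X]
    [FiniteDimensional k X]
    [AddCommGroup M] [Module Aᵐᵒᵖ M] [Module k M] [IsScalarTower k Aᵐᵒᵖ M]
    [FiniteDimensional k M]
    (f : X →ₗ[Aᵐᵒᵖ] M) :
    RightMinimal f ↔
      ∀ N : Submodule Aᵐᵒᵖ X, N ≤ LinearMap.ker f →
        (∃ N' : Submodule Aᵐᵒᵖ X, IsCompl N N') → N = ⊥ :=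
  rightMinimal_iff_ker_no_nonzero_summand_general (k := k) f
end

section
/- Let A be a finite-dimensional k-algebra and f : X → M a morphism of finite-dimensional right A-modules. Then f is right minimal if and only if every section s : X' → X (i.e., split monomorphism) with f ∘ s = 0 satisfies s = 0. -/
universe u

/-!
If `s` is a section with retraction `r` and `f ∘ s = 0`, then `h = 1 - s ∘ r` satisfies `f ∘ h = f` and
kills `s`, so right minimality forces `s = 0`. Conversely, if `f ∘ h = f`, the Fitting
decomposition `X = ker hⁿ ⊕ range hⁿ` exhibits `ker hⁿ` as a direct summand killed by
`f = f ∘ hⁿ`; it therefore vanishes, so `h` is injective, hence bijective since `X` has finite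
length.
-/

section

variable {R X M : Type*} [Ring R] [AddCommGroup X] [Module R X] [AddCommGroup M] [Module R M]

theorem LinearMap.comp_pow_eq_self {f : X →ₗ[R] M} {h : Module.End R X} (hfh : f.comp h = f)
    (n : ℕ) : f.comp (h ^ n) = f := by
  induction n with
  | zero => rfl
  | succ n ih => rw [pow_succ, Module.End.mul_eq_comp, ← LinearMap.comp_assoc, ih, hfh]

theorem RightMinimal.eq_zero_of_comp_eq_zero {X' : Type*} [AddCommGroup X'] [Module R X']
    {f : X →ₗ[R] M} (hf : RightMinimal f) {s : X' →ₗ[R] X} {r : X →ₗ[R] X'}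
    (hrs : r.comp s = LinearMap.id) (hfs : f.comp s = 0) : s = 0 := by
  set h : Module.End R X := LinearMap.id - s.comp r
  have hfh : f.comp h = f := by
    rw [LinearMap.comp_sub, LinearMap.comp_id, ← LinearMap.comp_assoc, hfs,
      LinearMap.zero_comp, sub_zero]
  have hhs : h.comp s = 0 := by
    rw [LinearMap.sub_comp, LinearMap.comp_assoc, hrs, LinearMap.id_comp, LinearMap.comp_id,
      sub_self]
  exact (LinearMap.cancel_left (hf h hfh).injective).mp (hhs.trans (LinearMap.comp_zero h).symm)

theorem rightMinimal_of_forall_isCompl [IsArtinian R X] [IsNoetherian R X] (f : X →ₗ[R] M)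
    (hf : ∀ p q : Submodule R X, IsCompl p q → f.comp p.subtype = 0 → p = ⊥) :
    RightMinimal f := by
  intro h hfh
  obtain ⟨n, hn⟩ := Filter.eventually_atTop.mp h.eventually_isCompl_ker_pow_range_pow
  have hker_pow : LinearMap.ker (h ^ (n + 1)) = ⊥ := by
    refine hf _ _ (hn (n + 1) n.le_succ) (LinearMap.le_ker_iff_comp_subtype_eq_zero.mp ?_)
    calc LinearMap.ker (h ^ (n + 1)) ≤ LinearMap.ker (f.comp (h ^ (n + 1))) :=
          LinearMap.ker_le_ker_comp _ _
      _ = LinearMap.ker f := by rw [LinearMap.comp_pow_eq_self hfh]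
  have hker : LinearMap.ker h = ⊥ := by
    refine eq_bot_iff.mpr (le_trans ?_ hker_pow.le)
    rw [pow_succ, Module.End.mul_eq_comp]
    exact LinearMap.ker_le_ker_comp _ _
  exact IsArtinian.bijective_of_injective_endomorphism h (LinearMap.ker_eq_bot.mp hker)

end

theorem rightMinimal_iff_section_zero_general
    {k : Type u} {A : Type u} [Field k] [Ring A] [Algebra k A]
    {X M : Type u}
    [AddCommGroup X] [Module Aᵐᵒᵖ X] [Module k X] [IsScalarTower k Aᵐᵒᵖ X]
    [FiniteDimensional k X]
    [AddCommGroup M] [Module Aᵐᵒᵖ M]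
    (f : X →ₗ[Aᵐᵒᵖ] M) :
    RightMinimal f ↔
      ∀ (X' : Type u) [AddCommGroup X'] [Module Aᵐᵒᵖ X'] [Module k X']
        [IsScalarTower k Aᵐᵒᵖ X'] [FiniteDimensional k X'] (s : X' →ₗ[Aᵐᵒᵖ] X),
        (∃ r : X →ₗ[Aᵐᵒᵖ] X', r.comp s = LinearMap.id) → f.comp s = 0 → s = 0 := by
  refine ⟨fun hf X' _ _ _ _ _ s ⟨r, hrs⟩ hfs => hf.eq_zero_of_comp_eq_zero hrs hfs, fun hsec => ?_⟩
  have : IsArtinian Aᵐᵒᵖ X := isArtinian_of_tower k inferInstance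
  have : IsNoetherian Aᵐᵒᵖ X := isNoetherian_of_tower k inferInstance
  refine rightMinimal_of_forall_isCompl f fun p q hpq hfp => ?_
  have : FiniteDimensional k p := inferInstanceAs (FiniteDimensional k (p.restrictScalars k))
  have hp : p.subtype = 0 := hsec p p.subtype ⟨_, p.projectionOnto_comp_subtype hpq⟩ hfp
  rw [← Submodule.range_subtype p, hp, LinearMap.range_zero]

/-- `f : X → M` is right minimal iff every section `s : X' → X` (split monomorphism)
with `f ∘ s = 0` is zero. -/
theorem rightMinimal_iff_section_zero
    {k : Type u} {A : Type u} [Field k] [Ring A] [Algebra k A] [FiniteDimensional k A]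
    {X M : Type u}
    [AddCommGroup X] [Module Aᵐᵒᵖ X] [Module k X] [IsScalarTower k Aᵐᵒᵖ X]
    [FiniteDimensional k X]
    [AddCommGroup M] [Module Aᵐᵒᵖ M] [Module k M] [IsScalarTower k Aᵐᵒᵖ M]
    [FiniteDimensional k M]
    (f : X →ₗ[Aᵐᵒᵖ] M) :
    RightMinimal f ↔
      ∀ (X' : Type u) [AddCommGroup X'] [Module Aᵐᵒᵖ X'] [Module k X']
        [IsScalarTower k Aᵐᵒᵖ X'] [FiniteDimensional k X'] (s : X' →ₗ[Aᵐᵒᵖ] X),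
        (∃ r : X →ₗ[Aᵐᵒᵖ] X', r.comp s = LinearMap.id) → f.comp s = 0 → s = 0 :=
  rightMinimal_iff_section_zero_general f
end

section
/- Let A be a finite-dimensional k-algebra, G a finite-dimensional right A-module, Λ = End_A(G), and I = add G. A morphism g : M → Y in mod A with Y ∈ I is left minimal if and only if the induced morphism Hom_A(g, G) : Hom_A(Y, G) → Hom_A(M, G) of left Λ-modules is right minimal. -/
universe u

/-- Left minimality. -/
def LeftMinimal {R M Y : Type*} [Ring R] [AddCommGroup M] [Module R M]
    [AddCommGroup Y] [Module R Y] (g : M →ₗ[R] Y) : Prop :=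
  ∀ h : Y →ₗ[R] Y, h.comp g = g → Function.Bijective h

/-- `Z` belongs to `add G`. -/
def InAdd (R : Type u) [Ring R] (G Z : Type u) [AddCommGroup G] [Module R G]
    [AddCommGroup Z] [Module R Z] : Prop :=
  ∃ (m : ℕ) (p : (Fin m → G) →ₗ[R] Z) (s : Z →ₗ[R] (Fin m → G)), p.comp s = LinearMap.id

/-- `Hom_A(g, G)`: precomposition with `g`, as a morphism of left `Λ = End_A(G)`-modules
`Hom_A(Y, G) → Hom_A(M, G)`. -/
def precompEnd {R : Type u} [Ring R] {G M Y : Type u} [AddCommGroup G] [Module R G]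
    [AddCommGroup M] [Module R M] [AddCommGroup Y] [Module R Y] (g : M →ₗ[R] Y) :
    (Y →ₗ[R] G) →ₗ[Module.End R G] (M →ₗ[R] G) where
  toFun f := f.comp g
  map_add' f₁ f₂ := by ext; simp
  map_smul' l f := by ext; simp

/-!
For `Y ∈ add G` the functor `Hom_A(-, G)` is fully faithful on morphisms into `Y`: faithful
because `Y` embeds into some `G^m`, full because `Hom_A(G^m, G)` is generated over `Λ` by the
coordinate projections, and fullness passes from `G^m` to its retracts. Hence it is an
anti-isomorphism `End_A(Y) ≅ End_Λ(Hom_A(Y, G))`, which preserves invertibility and matches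
the `h` with `h ∘ g = g` with the `H` with `Hom_A(g, G) ∘ H = Hom_A(g, G)`.
-/

open Function

section

variable {R : Type u} [Ring R] {G M N Y : Type u} [AddCommGroup G] [Module R G]
  [AddCommGroup M] [Module R M] [AddCommGroup N] [Module R N] [AddCommGroup Y] [Module R Y]

theorem precompEnd_comp (h : N →ₗ[R] Y) (g : M →ₗ[R] N) :
    precompEnd (G := G) (h ∘ₗ g) = precompEnd g ∘ₗ precompEnd h :=
  rfl

theorem precompEnd_id : precompEnd (G := G) (LinearMap.id : Y →ₗ[R] Y) = LinearMap.id :=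
  rfl

theorem precompEnd_injective {ι : Type*} {s : Y →ₗ[R] (ι → G)} (hs : Injective s) :
    Injective (precompEnd (G := G) : (M →ₗ[R] Y) → _) := by
  intro h₁ h₂ he
  ext x
  apply hs
  funext i
  exact LinearMap.congr_fun (LinearMap.congr_fun he (LinearMap.proj i ∘ₗ s)) x

theorem linearMap_ext_on_proj {ι : Type*} [Fintype ι] [DecidableEq ι] {W : Type*}
    [AddCommGroup W] [Module (Module.End R G) W]
    {F₁ F₂ : ((ι → G) →ₗ[R] G) →ₗ[Module.End R G] W}
    (h : ∀ i, F₁ (LinearMap.proj i) = F₂ (LinearMap.proj i)) : F₁ = F₂ := by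
  ext f
  have hf : f = ∑ i, (f ∘ₗ LinearMap.single R (fun _ => G) i) • LinearMap.proj i :=
    ((LinearMap.lsum R (fun _ => G) (Module.End R G)).apply_symm_apply f).symm
  rw [hf]
  simp only [map_sum, map_smul, h]

theorem precompEnd_surjective_pi {ι : Type} [Fintype ι] [DecidableEq ι] :
    Surjective (precompEnd (G := G) : (M →ₗ[R] (ι → G)) → _) := fun H =>
  ⟨LinearMap.pi fun i => H (LinearMap.proj i),
    linearMap_ext_on_proj fun i => LinearMap.proj_pi _ i⟩

theorem precompEnd_surjective_of_retract {P : Type u} [AddCommGroup P] [Module R P]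
    {p : P →ₗ[R] Y} {s : Y →ₗ[R] P} (hps : p ∘ₗ s = LinearMap.id)
    (hP : Surjective (precompEnd (G := G) : (M →ₗ[R] P) → _)) :
    Surjective (precompEnd (G := G) : (M →ₗ[R] Y) → _) := by
  intro H
  obtain ⟨h, hh⟩ := hP (H ∘ₗ precompEnd s)
  refine ⟨p ∘ₗ h, ?_⟩
  rw [precompEnd_comp, hh, LinearMap.comp_assoc, ← precompEnd_comp, hps, precompEnd_id,
    LinearMap.comp_id]

variable (R G) in
def precompEndMonoidHom (Y : Type u) [AddCommGroup Y] [Module R Y] :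
    Module.End R Y →* (Module.End (Module.End R G) (Y →ₗ[R] G))ᵐᵒᵖ where
  toFun h := MulOpposite.op (precompEnd h)
  map_one' := rfl
  map_mul' _ _ := rfl

theorem InAdd.precompEnd_injective (hY : InAdd R G Y) :
    Injective (precompEnd (G := G) : (M →ₗ[R] Y) → _) := by
  obtain ⟨m, p, s, hps⟩ := hY
  exact _root_.precompEnd_injective (LinearMap.injective_of_comp_eq_id s p hps)

theorem InAdd.precompEnd_surjective (hY : InAdd R G Y) :
    Surjective (precompEnd (G := G) : (M →ₗ[R] Y) → _) := by
  obtain ⟨m, p, s, hps⟩ := hY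
  exact precompEnd_surjective_of_retract hps precompEnd_surjective_pi

theorem InAdd.bijective_precompEnd_iff (hY : InAdd R G Y) (h : Module.End R Y) :
    Bijective (precompEnd (G := G) h) ↔ Bijective h := by
  let e := MulEquiv.ofBijective (precompEndMonoidHom R G Y)
    ⟨MulOpposite.op_injective.comp hY.precompEnd_injective,
      MulOpposite.op_surjective.comp hY.precompEnd_surjective⟩
  rw [← Module.End.isUnit_iff, ← Module.End.isUnit_iff, ← isUnit_op, ← MulEquiv.isUnit_map e]
  rfl

end

theorem leftMinimal_iff_precomp_rightMinimal_general
    {A : Type u} [Ring A]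
    (G : Type u) [AddCommGroup G] [Module Aᵐᵒᵖ G]
    {M Y : Type u}
    [AddCommGroup M] [Module Aᵐᵒᵖ M]
    [AddCommGroup Y] [Module Aᵐᵒᵖ Y]
    (hY : InAdd Aᵐᵒᵖ G Y) (g : M →ₗ[Aᵐᵒᵖ] Y) :
    LeftMinimal g ↔ RightMinimal (precompEnd (G := G) g) := by
  rw [LeftMinimal, RightMinimal, hY.precompEnd_surjective.forall]
  refine forall_congr' fun h => ?_
  rw [← precompEnd_comp, hY.precompEnd_injective.eq_iff, hY.bijective_precompEnd_iff]

/-- For `Y ∈ add G`, a morphism `g : M → Y` is left minimal in `mod A` iff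
`Hom_A(g, G) : Hom_A(Y, G) → Hom_A(M, G)` is right minimal as a morphism of left
`Λ = End_A(G)`-modules. -/
theorem leftMinimal_iff_precomp_rightMinimal
    {k : Type u} {A : Type u} [Field k] [Ring A] [Algebra k A] [FiniteDimensional k A]
    (G : Type u) [AddCommGroup G] [Module Aᵐᵒᵖ G] [Module k G] [IsScalarTower k Aᵐᵒᵖ G]
    [FiniteDimensional k G]
    {M Y : Type u}
    [AddCommGroup M] [Module Aᵐᵒᵖ M] [Module k M] [IsScalarTower k Aᵐᵒᵖ M]
    [FiniteDimensional k M]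
    [AddCommGroup Y] [Module Aᵐᵒᵖ Y] [Module k Y] [IsScalarTower k Aᵐᵒᵖ Y]
    [FiniteDimensional k Y]
    (hY : InAdd Aᵐᵒᵖ G Y) (g : M →ₗ[Aᵐᵒᵖ] Y) :
    LeftMinimal g ↔ RightMinimal (precompEnd (G := G) g) :=
  leftMinimal_iff_precomp_rightMinimal_general G hY g
end

section
/- Let Q be a finite acyclic quiver with full commutativity relations ρ forming a bound quiver presentation of the incidence algebra A of the poset (Q_0, ⪯), where x ⪯ y iff there is a path from x to y. If I is an interval (connected convex full subquiver) of Q and W is a quotient module of the interval module V_I, then W is interval decomposable, i.e., W is isomorphic to a finite direct sum of interval modules. -/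
/-!
Let `f : V_I → W` be surjective and `g a := f (1_a)`. Every `W a` is spanned by `g a`, and since
the structure maps of `V_I` send `1_a` to `1_b`, those of `W` send `g a` to `g b` whenever
`g a ≠ 0`. Hence `W ≅ V_S` for the support `S = {a | g a ≠ 0}`, which is convex: for
`a ≤ b ≤ c` with `g a ≠ 0` we get `g c = W(b ≤ c) (g b)`, so `g b = 0` would force `g c = 0`.
Finally, a convex set is the disjoint union of its zigzag components; these are intervals with
no comparabilities between different ones, so `V_S` is the direct sum of the corresponding
interval modules.
-/

set_option linter.unusedSectionVars false

open scoped Classical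

/-- A persistence module over the poset `P`: a functor `P → Vect_k`.
(This models pointwise finite modules over the incidence algebra `A = kQ/ρ` of the poset.) -/
structure PersMod (k P : Type) [Field k] [PartialOrder P] where
  V : P → Type
  [acg : ∀ a, AddCommGroup (V a)]
  [mod : ∀ a, Module k (V a)]
  map : ∀ {a b : P}, a ≤ b → (V a →ₗ[k] V b)
  map_id : ∀ a : P, map (le_refl a) = LinearMap.id
  map_comp : ∀ {a b c : P} (h₁ : a ≤ b) (h₂ : b ≤ c),
    (map h₂).comp (map h₁) = map (h₁.trans h₂)

attribute [instance] PersMod.acg PersMod.mod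

variable {k P : Type} [Field k] [PartialOrder P]

/-- Morphisms of persistence modules, as a `k`-submodule of the product of Hom-spaces. -/
def PersHomSub (M N : PersMod k P) :
    Submodule k (∀ a : P, M.V a →ₗ[k] N.V a) where
  carrier := {f | ∀ ⦃a b : P⦄ (h : a ≤ b), (N.map h).comp (f a) = (f b).comp (M.map h)}
  add_mem' := by
    intro f g hf hg a b h
    simp only [Pi.add_apply, LinearMap.comp_add, LinearMap.add_comp, hf h, hg h]
  zero_mem' := by intro a b h; simp
  smul_mem' := by
    intro c f hf a b h
    simp only [Pi.smul_apply, LinearMap.comp_smul, LinearMap.smul_comp, hf h]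

/-- The space of morphisms `M → N` of persistence modules. -/
def PersHom (M N : PersMod k P) : Type := ↥(PersHomSub M N)

noncomputable instance (M N : PersMod k P) : AddCommGroup (PersHom M N) :=
  inferInstanceAs (AddCommGroup ↥(PersHomSub M N))
noncomputable instance (M N : PersMod k P) : Module k (PersHom M N) :=
  inferInstanceAs (Module k ↥(PersHomSub M N))

/-- Composition of morphisms of persistence modules. -/
def PersHom.comp {M N O : PersMod k P} (g : PersHom N O) (f : PersHom M N) :
    PersHom M O :=
  ⟨fun a => (g.1 a).comp (f.1 a), by
    intro a b h
    rw [← LinearMap.comp_assoc, g.2 h, LinearMap.comp_assoc, f.2 h, LinearMap.comp_assoc]⟩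

def IsMonoP {M N : PersMod k P} (f : PersHom M N) : Prop :=
  ∀ a : P, Function.Injective (f.1 a)

def IsEpiP {M N : PersMod k P} (f : PersHom M N) : Prop :=
  ∀ a : P, Function.Surjective (f.1 a)

def IsIsoP {M N : PersMod k P} (f : PersHom M N) : Prop :=
  ∀ a : P, Function.Bijective (f.1 a)

/-- Convexity of a subset of the poset. -/
def IsConvexSet (I : Set P) : Prop :=
  ∀ ⦃a b c : P⦄, a ∈ I → c ∈ I → a ≤ b → b ≤ c → b ∈ I

/-- Zigzag-connectivity of a subset of the poset. -/
def IsConnectedSet (I : Set P) : Prop :=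
  I.Nonempty ∧ ∀ a ∈ I, ∀ b ∈ I,
    Relation.ReflTransGen (fun x y => x ∈ I ∧ y ∈ I ∧ (x ≤ y ∨ y ≤ x)) a b

/-- An interval of the poset: a connected convex subset. -/
def IsIntervalSet (I : Set P) : Prop := IsConvexSet I ∧ IsConnectedSet I

/-- The underlying linear map of the interval module. -/
noncomputable def intervalMap (I : Set P) (a b : P) :
    ↥(if a ∈ I then (⊤ : Submodule k k) else ⊥) →ₗ[k]
      ↥(if b ∈ I then (⊤ : Submodule k k) else ⊥) where
  toFun v := ⟨if a ∈ I ∧ b ∈ I then (v : k) else 0, by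
    by_cases hb : b ∈ I
    · simp [hb]
    · have hab : ¬(a ∈ I ∧ b ∈ I) := fun h' => hb h'.2
      rw [if_neg hab, if_neg hb]; exact Submodule.zero_mem _⟩
  map_add' v w := by
    apply Subtype.ext
    by_cases h' : a ∈ I ∧ b ∈ I <;> simp [h']
  map_smul' c v := by
    apply Subtype.ext
    by_cases h' : a ∈ I ∧ b ∈ I <;> simp [h']

@[simp] lemma intervalMap_coe (I : Set P) (a b : P)
    (v : ↥(if a ∈ I then (⊤ : Submodule k k) else ⊥)) :
    ((intervalMap I a b v : ↥(if b ∈ I then (⊤ : Submodule k k) else ⊥)) : k)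
      = if a ∈ I ∧ b ∈ I then (v : k) else 0 := rfl

lemma intervalMem_zero {I : Set P} {a : P} (ha : a ∉ I)
    (v : ↥(if a ∈ I then (⊤ : Submodule k k) else ⊥)) : (v : k) = 0 := by
  obtain ⟨x, hx⟩ := v
  rw [if_neg ha] at hx
  exact (Submodule.mem_bot k).mp hx

/-- The interval module `V_I` associated to a convex subset `I`. -/
noncomputable def intervalMod (I : Set P) (hI : IsConvexSet I) : PersMod k P where
  V a := ↥(if a ∈ I then (⊤ : Submodule k k) else ⊥)
  map {a b} _ := intervalMap I a b
  map_id a := by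
    ext v
    rw [intervalMap_coe]
    by_cases ha : a ∈ I
    · simp [ha]
    · rw [if_neg (fun h' => ha h'.1)]; exact (intervalMem_zero ha (LinearMap.id v)).symm
  map_comp {a b c} h₁ h₂ := by
    ext v
    rw [LinearMap.comp_apply, intervalMap_coe, intervalMap_coe, intervalMap_coe]
    by_cases ha : a ∈ I <;> by_cases hb : b ∈ I <;> by_cases hc : c ∈ I <;>
      first
        | (exact absurd (hI ha hc h₁ h₂) hb)
        | simp [ha, hb, hc]

/-- Finite direct sums of persistence modules. -/
noncomputable def dSum {ι : Type} (M : ι → PersMod k P) : PersMod k P where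
  V a := ∀ i, (M i).V a
  map {a b} h := LinearMap.pi fun i => ((M i).map h).comp (LinearMap.proj i)
  map_id a := by
    refine LinearMap.ext fun v => ?_
    funext i
    simp [LinearMap.pi_apply, (M i).map_id]
  map_comp {a b c} h₁ h₂ := by
    refine LinearMap.ext fun v => ?_
    funext i
    simpa [LinearMap.pi_apply] using LinearMap.congr_fun ((M i).map_comp h₁ h₂) (v i)

/-- A persistence module is interval decomposable if it is isomorphic to a finite
direct sum of interval modules. -/
def IntervalDecomposable (W : PersMod k P) : Prop :=
  ∃ (n : ℕ) (J : Fin n → Set P) (hJ : ∀ i, IsIntervalSet (J i))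
    (e : PersHom W (dSum fun i => intervalMod (J i) (hJ i).1)), IsIsoP e

/-- The combined morphism `⊕ᵢ Mᵢ → N` of a finite family of morphisms `Mᵢ → N`. -/
noncomputable def combineHom {ι : Type} [Fintype ι] {Mf : ι → PersMod k P}
    {N : PersMod k P} (f : ∀ i, PersHom (Mf i) N) : PersHom (dSum Mf) N :=
  ⟨fun a => ∑ i, ((f i).1 a).comp (LinearMap.proj i), by
    intro a b h
    refine LinearMap.ext fun v => ?_
    simp only [LinearMap.comp_apply, LinearMap.sum_apply, LinearMap.proj_apply, map_sum]
    refine Finset.sum_congr rfl fun i _ => ?_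
    have := LinearMap.congr_fun ((f i).2 h) (v i)
    exact this⟩

theorem IsIsoP.comp {M N O : PersMod k P} {g : PersHom N O} {f : PersHom M N}
    (hg : IsIsoP g) (hf : IsIsoP f) : IsIsoP (g.comp f) :=
  fun a => (hg a).comp (hf a)

theorem IsIsoP.exists_inverse {M N : PersMod k P} {f : PersHom M N} (hf : IsIsoP f) :
    ∃ g : PersHom N M, IsIsoP g := by
  let e a := LinearEquiv.ofBijective (f.1 a) (hf a)
  refine ⟨⟨fun a => (e a).symm.toLinearMap, fun a b h => LinearMap.ext fun y => ?_⟩,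
    fun a => (e a).symm.bijective⟩
  apply (hf b).1
  have hnat := LinearMap.congr_fun (f.2 h) ((e a).symm y)
  have hfa : f.1 a ((e a).symm y) = y := (e a).apply_symm_apply y
  have hfb : f.1 b ((e b).symm (N.map h y)) = N.map h y := (e b).apply_symm_apply _
  simp only [LinearMap.comp_apply, LinearEquiv.coe_coe] at hnat ⊢
  rw [hfb, ← hnat, hfa]

theorem IntervalDecomposable.of_isIsoP {M W : PersMod k P} (hM : IntervalDecomposable M)
    {e : PersHom M W} (he : IsIsoP e) : IntervalDecomposable W := by
  obtain ⟨n, J, hJ, d, hd⟩ := hM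
  obtain ⟨e', he'⟩ := he.exists_inverse
  exact ⟨n, J, hJ, d.comp e', hd.comp he'⟩

theorem intervalSpace_subsingleton {I : Set P} {a : P} (ha : a ∉ I) :
    Subsingleton ↥(if a ∈ I then (⊤ : Submodule k k) else ⊥) :=
  ⟨fun v w => Subtype.ext ((intervalMem_zero ha v).trans (intervalMem_zero ha w).symm)⟩

noncomputable def toIntervalSpace (I : Set P) (a : P) :
    k →ₗ[k] ↥(if a ∈ I then (⊤ : Submodule k k) else ⊥) where
  toFun x := ⟨if a ∈ I then x else 0, by
    split_ifs; exacts [Submodule.mem_top, Submodule.zero_mem _]⟩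
  map_add' x y := by apply Subtype.ext; by_cases h : a ∈ I <;> simp [h]
  map_smul' c x := by apply Subtype.ext; by_cases h : a ∈ I <;> simp [h]

@[simp] theorem toIntervalSpace_coe (I : Set P) (a : P) (x : k) :
    (toIntervalSpace I a x : k) = if a ∈ I then x else 0 := rfl

noncomputable def intervalGen (I : Set P) (a : P) :
    ↥(if a ∈ I then (⊤ : Submodule k k) else ⊥) :=
  toIntervalSpace I a 1

theorem intervalGen_of_not_mem {I : Set P} {a : P} (ha : a ∉ I) :
    intervalGen (k := k) I a = 0 :=
  Subtype.ext (by simp [intervalGen, ha])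

theorem coe_smul_intervalGen {I : Set P} {a : P}
    (v : ↥(if a ∈ I then (⊤ : Submodule k k) else ⊥)) : (v : k) • intervalGen I a = v := by
  apply Subtype.ext
  by_cases ha : a ∈ I
  · simp [intervalGen, ha]
  · simp [intervalGen, ha, intervalMem_zero ha v]

theorem intervalMap_intervalGen {I : Set P} {a : P} (b : P) (ha : a ∈ I) :
    intervalMap I a b (intervalGen (k := k) I a) = intervalGen I b :=
  Subtype.ext (by by_cases hb : b ∈ I <;> simp [intervalGen, ha, hb])

noncomputable def toComponents {ι : Type} (J : Set P) (hJ : IsConvexSet J) (C : ι → Set P)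
    (hC : ∀ i, IsConvexSet (C i)) (hCJ : ∀ i, C i ⊆ J)
    (hcomp : ∀ i ⦃a b⦄, a ≤ b → a ∈ J → b ∈ J → (a ∈ C i ↔ b ∈ C i)) :
    PersHom (intervalMod (k := k) J hJ) (dSum fun i => intervalMod (C i) (hC i)) :=
  ⟨fun a => LinearMap.pi fun i => (toIntervalSpace (C i) a).comp (Submodule.subtype _), by
    intro a b h
    refine LinearMap.ext fun v => funext fun i => Subtype.ext ?_
    show (if a ∈ C i ∧ b ∈ C i then (if a ∈ C i then v.1 else 0) else 0)
      = if b ∈ C i then (if a ∈ J ∧ b ∈ J then v.1 else 0) else 0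
    by_cases ha : a ∈ J
    · by_cases hb : b ∈ J
      · by_cases hbC : b ∈ C i <;> simp [ha, hb, hbC, hcomp i h ha hb]
      · have hbC : b ∉ C i := fun hbC => hb (hCJ i hbC)
        simp [hbC]
    · simp [intervalMem_zero ha v]⟩

theorem isIsoP_toComponents {ι : Type} {J : Set P} {C : ι → Set P} (hJ : IsConvexSet J)
    (hC : ∀ i, IsConvexSet (C i)) (hCJ : ∀ i, C i ⊆ J) (hcover : ∀ a ∈ J, ∃ i, a ∈ C i)
    (hdisj : ∀ i j a, a ∈ C i → a ∈ C j → i = j)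
    (hcomp : ∀ i ⦃a b⦄, a ≤ b → a ∈ J → b ∈ J → (a ∈ C i ↔ b ∈ C i)) :
    IsIsoP (toComponents (k := k) J hJ C hC hCJ hcomp) := by
  intro a
  by_cases ha : a ∈ J
  · obtain ⟨i₀, hi₀⟩ := hcover a ha
    constructor
    · intro v w hvw
      have h₀ : (if a ∈ C i₀ then v.1 else 0) = if a ∈ C i₀ then w.1 else 0 :=
        congrArg Subtype.val (congrFun hvw i₀)
      rw [if_pos hi₀, if_pos hi₀] at h₀
      exact Subtype.ext h₀
    · intro y
      refine ⟨⟨(y i₀).1, by simp [ha]⟩, funext fun i => Subtype.ext ?_⟩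
      show (if a ∈ C i then (y i₀).1 else 0) = (y i).1
      by_cases hi : a ∈ C i
      · obtain rfl := hdisj i i₀ a hi hi₀
        simp [hi]
      · simp [hi, intervalMem_zero hi (y i)]
  · have hi : ∀ i, a ∉ C i := fun i hi => ha (hCJ i hi)
    have : Subsingleton ((intervalMod (k := k) J hJ).V a) := intervalSpace_subsingleton ha
    have : Subsingleton ((dSum fun i => intervalMod (k := k) (C i) (hC i)).V a) :=
      @Pi.instSubsingleton _ _ fun i => intervalSpace_subsingleton (hi i)
    exact ⟨Function.injective_of_subsingleton _, fun _ => ⟨0, Subsingleton.elim _ _⟩⟩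

section Components

variable (J : Set P)

def ComparableIn (x y : P) : Prop := x ∈ J ∧ y ∈ J ∧ (x ≤ y ∨ y ≤ x)

instance : Std.Symm (ComparableIn J) := ⟨fun _ _ h => ⟨h.2.1, h.1, h.2.2.symm⟩⟩

def zigzagComponent (a : P) : Set P := {b | Relation.ReflTransGen (ComparableIn J) a b}

variable {J}

theorem mem_zigzagComponent_self (a : P) : a ∈ zigzagComponent J a := .refl

theorem zigzagComponent_subset {a : P} (ha : a ∈ J) : zigzagComponent J a ⊆ J := by
  intro b hb
  rcases hb.cases_tail with rfl | ⟨_, _, hcb⟩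
  exacts [ha, hcb.2.1]

theorem zigzagComponent_eq_of_mem {a b : P} (hb : b ∈ zigzagComponent J a) :
    zigzagComponent J b = zigzagComponent J a :=
  Set.ext fun _ => ⟨hb.trans, (Std.Symm.symm _ _ hb).trans⟩

theorem mem_zigzagComponent_of_comparableIn {a b c : P} (hb : b ∈ zigzagComponent J a)
    (hbc : ComparableIn J b c) : c ∈ zigzagComponent J a :=
  hb.tail hbc

theorem reflTransGen_comparableIn_zigzagComponent {a b : P}
    (h : Relation.ReflTransGen (ComparableIn J) a b) :
    Relation.ReflTransGen (ComparableIn (zigzagComponent J a)) a b := by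
  induction h with
  | refl => exact .refl
  | tail hac hcb ih => exact ih.tail ⟨hac, hac.tail hcb, hcb.2.2⟩

theorem isIntervalSet_zigzagComponent (hJ : IsConvexSet J) {a : P} (ha : a ∈ J) :
    IsIntervalSet (zigzagComponent J a) := by
  refine ⟨fun b c d hb hd hbc hcd => ?_, ⟨a, mem_zigzagComponent_self a⟩, fun b hb c hc => ?_⟩
  · have hsub := zigzagComponent_subset ha
    exact mem_zigzagComponent_of_comparableIn hb
      ⟨hsub hb, hJ (hsub hb) (hsub hd) hbc hcd, .inl hbc⟩
  · rw [← zigzagComponent_eq_of_mem hb] at hc ⊢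
    exact reflTransGen_comparableIn_zigzagComponent hc

theorem intervalDecomposable_intervalMod [Finite P] (hJ : IsConvexSet J) :
    IntervalDecomposable (intervalMod (k := k) J hJ) := by
  let e := (Finite.equivFin ↥(zigzagComponent J '' J)).symm
  choose a haJ ha using fun n => (e n).2
  let C n := zigzagComponent J (a n)
  have hC n : IsIntervalSet (C n) := isIntervalSet_zigzagComponent hJ (haJ n)
  have hCJ n : C n ⊆ J := zigzagComponent_subset (haJ n)
  have hcover : ∀ x ∈ J, ∃ n, x ∈ C n := by
    intro x hx
    refine ⟨e.symm ⟨_, x, hx, rfl⟩, ?_⟩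
    simp only [C, ha, Equiv.apply_symm_apply]
    exact mem_zigzagComponent_self x
  have hdisj : ∀ n m x, x ∈ C n → x ∈ C m → n = m := by
    intro n m x hn hm
    refine e.injective (Subtype.ext ?_)
    rw [← ha, ← ha, ← zigzagComponent_eq_of_mem hn, zigzagComponent_eq_of_mem hm]
  have hcomp : ∀ n ⦃x y⦄, x ≤ y → x ∈ J → y ∈ J → (x ∈ C n ↔ y ∈ C n) := fun n x y hxy hx hy =>
    ⟨fun h => mem_zigzagComponent_of_comparableIn h ⟨hx, hy, .inl hxy⟩,
      fun h => mem_zigzagComponent_of_comparableIn h ⟨hy, hx, .inr hxy⟩⟩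
  exact ⟨_, C, hC, toComponents J hJ C (fun n => (hC n).1) hCJ hcomp,
    isIsoP_toComponents hJ _ hCJ hcover hdisj hcomp⟩

end Components

section Generators

def sectionSupport {W : PersMod k P} (g : ∀ a, W.V a) : Set P := {a | g a ≠ 0}

variable {W : PersMod k P} {g : ∀ a, W.V a}

theorem mem_sectionSupport {a : P} : a ∈ sectionSupport g ↔ g a ≠ 0 := Iff.rfl

theorem isConvexSet_sectionSupport (hmap : ∀ ⦃a b⦄ (h : a ≤ b), g a ≠ 0 → W.map h (g a) = g b) :
    IsConvexSet (sectionSupport g) := by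
  intro a b c ha hc hab hbc hb
  apply hc
  rw [← hmap (hab.trans hbc) ha, ← W.map_comp hab hbc, LinearMap.comp_apply, hmap hab ha, hb,
    map_zero]

noncomputable def fromGenerators (hmap : ∀ ⦃a b⦄ (h : a ≤ b), g a ≠ 0 → W.map h (g a) = g b) :
    PersHom (intervalMod (k := k) (sectionSupport g) (isConvexSet_sectionSupport hmap)) W :=
  ⟨fun a => (LinearMap.toSpanSingleton k _ (g a)).comp (Submodule.subtype _), by
    intro a b h
    refine LinearMap.ext fun v => ?_
    show W.map h (v.1 • g a)
      = (if a ∈ sectionSupport g ∧ b ∈ sectionSupport g then v.1 else 0) • g b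
    by_cases ha : g a = 0
    · have hv : v.1 = 0 := intervalMem_zero (not_not.mpr ha) v
      simp [hv]
    · rw [map_smul, hmap h ha]
      by_cases hb : g b = 0 <;> simp [mem_sectionSupport, ha, hb]⟩

theorem isIsoP_fromGenerators (hspan : ∀ a (x : W.V a), ∃ c : k, c • g a = x)
    (hmap : ∀ ⦃a b⦄ (h : a ≤ b), g a ≠ 0 → W.map h (g a) = g b) :
    IsIsoP (fromGenerators hmap) := by
  intro a
  by_cases ha : g a = 0
  · have : Subsingleton
        ((intervalMod (k := k) (sectionSupport g) (isConvexSet_sectionSupport hmap)).V a) :=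
      intervalSpace_subsingleton (not_not.mpr ha)
    refine ⟨Function.injective_of_subsingleton _, fun x => ⟨0, ?_⟩⟩
    obtain ⟨c, rfl⟩ := hspan a x
    simp [ha]
  · constructor
    · intro v w hvw
      exact Subtype.ext (smul_left_injective k ha hvw)
    · intro x
      obtain ⟨c, rfl⟩ := hspan a x
      exact ⟨⟨c, by rw [if_pos (mem_sectionSupport.mpr ha)]; exact Submodule.mem_top⟩, rfl⟩

end Generators

theorem IsEpiP.exists_isIsoP_intervalMod {I : Set P} {hI : IsConvexSet I} {W : PersMod k P}
    {f : PersHom (intervalMod (k := k) I hI) W} (hf : IsEpiP f) :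
    ∃ (S : Set P) (hS : IsConvexSet S) (e : PersHom (intervalMod (k := k) S hS) W), IsIsoP e := by
  let g a : W.V a := f.1 a (intervalGen I a)
  have hspan a (x : W.V a) : ∃ c : k, c • g a = x := by
    obtain ⟨v, rfl⟩ := hf a x
    exact ⟨v.1, (map_smul (f.1 a) v.1 (intervalGen I a)).symm.trans
      (congrArg (f.1 a) (coe_smul_intervalGen v))⟩
  have hmap ⦃a b : P⦄ (h : a ≤ b) (ha : g a ≠ 0) : W.map h (g a) = g b := by
    have haI : a ∈ I := by_contra fun haI => ha <| by
      simp only [g, intervalGen_of_not_mem haI]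
      exact map_zero _
    exact (LinearMap.congr_fun (f.2 h) _).trans (congrArg _ (intervalMap_intervalGen b haI))
  exact ⟨_, _, fromGenerators hmap, isIsoP_fromGenerators hspan hmap⟩

/-- Over the incidence algebra of a finite poset (presented by an acyclic
quiver with full commutativity relations), every quotient module `W` of an interval module
`V_I` is interval decomposable. -/
theorem quotient_of_interval_module_is_interval_decomposable
    {k P : Type} [Field k] [PartialOrder P] [Fintype P]
    (I : Set P) (hI : IsIntervalSet I) (W : PersMod k P)
    (hW : ∃ f : PersHom (intervalMod I hI.1) W, IsEpiP f) :
    IntervalDecomposable W := by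
  obtain ⟨f, hf⟩ := hW
  obtain ⟨S, hS, e, he⟩ := hf.exists_isIsoP_intervalMod
  exact (intervalDecomposable_intervalMod hS).of_isIsoP he
end

section
/- Let A be a finite-dimensional k-algebra and f : X → M a morphism of finite-dimensional right A-modules. Then f is right minimal if and only if the length of X is minimal among lengths of domains of morphisms equivalent to f, i.e., ℓ(X) ≤ ℓ(dom(g)) for all g equivalent to f. -/
universe u

/-- The composition length of a module, i.e. the Krull dimension of its lattice of
submodules (for finite length modules this is the usual composition length `ℓ`). -/
noncomputable def modLength (R X : Type*) [Ring R] [AddCommGroup X] [Module R X] :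
    WithBot ℕ∞ :=
  Order.krullDim (Submodule R X)

section Aux

variable {k R X : Type*} [Field k] [Ring R] [SMul k R]
  [AddCommGroup X] [Module R X] [Module k X] [IsScalarTower k R X] [FiniteDimensional k X]

lemma aux_strictMono :
    StrictMono (fun N : Submodule R X => Module.finrank k (N.restrictScalars k)) := by
  intro a b hab
  apply Submodule.finrank_lt_finrank_of_lt
  refine lt_of_le_of_ne (fun x hx => ?_) ?_
  · rw [Submodule.restrictScalars_mem] at hx ⊢
    exact hab.le hx
  · intro hcontra
    exact hab.ne (Submodule.restrictScalars_injective k _ _ hcontra)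

lemma aux_len (p : LTSeries (Submodule R X)) : p.length ≤ Module.finrank k X := by
  have h1 := LTSeries.head_add_length_le_nat (p.map _ (aux_strictMono (k := k) (R := R) (X := X)))
  have h2 : (p.map _ (aux_strictMono (k := k) (R := R) (X := X))).last ≤ Module.finrank k X := by
    rw [LTSeries.last_map]
    exact Submodule.finrank_le _
  have h3 : (p.map _ (aux_strictMono (k := k) (R := R) (X := X))).length = p.length := rfl
  omega

/-- Given a proper submodule `N < ⊤` and a chain in `N`, we get a strictly longer chain in `X`. -/
lemma aux_snoc (N : Submodule R X) (hN : N ≠ ⊤) (p : LTSeries (Submodule R ↥N)) :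
    ∃ q : LTSeries (Submodule R X), q.length = p.length + 1 := by
  refine ⟨(p.map (Submodule.map N.subtype)
      (Submodule.map_strictMono_of_injective (Submodule.injective_subtype N))).snoc ⊤ ?_, rfl⟩
  rw [LTSeries.last_map]
  exact lt_of_le_of_lt (Submodule.map_subtype_le N _) (lt_top_iff_ne_top.2 hN)

end Aux

/-- `f : X → M` is right minimal iff `ℓ(X)` is minimal among the lengths of the domains of
morphisms equivalent to `f` (where `g` is equivalent to `f` if each factors through
the other). -/
theorem rightMinimal_iff_length_minimal
    {k : Type u} {A : Type u} [Field k] [Ring A] [Algebra k A] [FiniteDimensional k A]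
    {X M : Type u}
    [AddCommGroup X] [Module Aᵐᵒᵖ X] [Module k X] [IsScalarTower k Aᵐᵒᵖ X]
    [FiniteDimensional k X]
    [AddCommGroup M] [Module Aᵐᵒᵖ M] [Module k M] [IsScalarTower k Aᵐᵒᵖ M]
    [FiniteDimensional k M]
    (f : X →ₗ[Aᵐᵒᵖ] M) :
    RightMinimal f ↔
      ∀ (Y : Type u) [AddCommGroup Y] [Module Aᵐᵒᵖ Y] [Module k Y]
        [IsScalarTower k Aᵐᵒᵖ Y] [FiniteDimensional k Y] (g : Y →ₗ[Aᵐᵒᵖ] M),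
        (∃ u : X →ₗ[Aᵐᵒᵖ] Y, g.comp u = f) → (∃ v : Y →ₗ[Aᵐᵒᵖ] X, f.comp v = g) →
          modLength Aᵐᵒᵖ X ≤ modLength Aᵐᵒᵖ Y := by
  constructor
  · -- right minimal → length minimal
    rintro hmin Y _ _ _ _ _ g ⟨u, hu⟩ ⟨v, hv⟩
    have hcomp : f.comp (v.comp u) = f := by
      rw [← LinearMap.comp_assoc, hv, hu]
    have hbij := hmin _ hcomp
    have hinj : Function.Injective u := by
      have : Function.Injective (⇑v ∘ ⇑u) := by
        rw [← LinearMap.coe_comp]; exact hbij.injective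
      exact Function.Injective.of_comp this
    exact Order.krullDim_le_of_strictMono (Submodule.map u)
      (Submodule.map_strictMono_of_injective hinj)
  · -- length minimal → right minimal
    intro hlen h hfh
    set N := LinearMap.range h with hNdef
    haveI : FiniteDimensional k ↥N :=
      FiniteDimensional.of_injective ((N.subtype).restrictScalars k)
        (Submodule.injective_subtype N)
    have hg_fact : ∃ u' : X →ₗ[Aᵐᵒᵖ] ↥N, (f.comp N.subtype).comp u' = f := by
      refine ⟨h.rangeRestrict, ?_⟩
      ext x
      simp only [LinearMap.comp_apply, Submodule.coe_subtype, LinearMap.rangeRestrict]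
      have := congrArg (fun φ => φ x) hfh
      simpa using this
    have hle : modLength Aᵐᵒᵖ X ≤ modLength Aᵐᵒᵖ ↥N :=
      hlen ↥N (f.comp N.subtype) hg_fact ⟨N.subtype, rfl⟩
    -- show N = ⊤
    have hNtop : N = ⊤ := by
      by_contra hN
      -- arbitrarily long chains in Submodule Aᵐᵒᵖ ↥N
      have hchains : ∀ j : ℕ, ∃ p : LTSeries (Submodule Aᵐᵒᵖ ↥N), j ≤ p.length := by
        intro j
        induction j with
        | zero => exact ⟨RelSeries.singleton _ ⊥, Nat.zero_le _⟩
        | succ j ih =>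
          obtain ⟨p, hp⟩ := ih
          obtain ⟨q, hq⟩ := aux_snoc N hN p
          have h1 : ((j + 1 : ℕ) : WithBot ℕ∞) ≤ Order.krullDim (Submodule Aᵐᵒᵖ X) := by
            refine le_trans ?_ (Order.LTSeries.length_le_krullDim q)
            rw [hq]
            exact_mod_cast by exact_mod_cast Nat.add_le_add_right hp 1
          have h2 : ((j + 1 : ℕ) : WithBot ℕ∞) ≤ Order.krullDim (Submodule Aᵐᵒᵖ ↥N) :=
            le_trans h1 hle
          haveI : Nonempty (Submodule Aᵐᵒᵖ ↥N) := ⟨⊥⟩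
          rw [Order.krullDim_eq_iSup_length] at h2
          have h3 : ((j + 1 : ℕ) : ℕ∞) ≤ ⨆ p' : LTSeries (Submodule Aᵐᵒᵖ ↥N),
              (p'.length : ℕ∞) := by exact_mod_cast h2
          have h4 : ((j : ℕ) : ℕ∞) < ⨆ p' : LTSeries (Submodule Aᵐᵒᵖ ↥N),
              (p'.length : ℕ∞) := lt_of_lt_of_le (by exact_mod_cast Nat.lt_succ_self j) h3
          obtain ⟨p', hp'⟩ := lt_iSup_iff.mp h4
          exact ⟨p', by exact_mod_cast Nat.succ_le_of_lt (by exact_mod_cast hp')⟩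
      obtain ⟨p, hp⟩ := hchains (Module.finrank k ↥N + 1)
      have := aux_len (k := k) p
      omega
    have hsurj : Function.Surjective h := LinearMap.range_eq_top.mp hNtop
    have hinjk : Function.Injective (h.restrictScalars k) :=
      (LinearMap.injective_iff_surjective_of_finrank_eq_finrank rfl).mpr hsurj
    exact ⟨hinjk, hsurj⟩
end
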